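/- Let m ≥ 1 and k ≥ 1 be integers and let v : Finset (Fin m) → ℝ be a matroid rank sum (MRS) function. Then the function x ↦ G_k^v(x) (defined by the lottery formula, which is a polynomial in x) is concave on the polytope P_k: ConcaveOn ℝ P_k G_k^v. (The k-bounded-lottery rounding scheme is convex for combinatorial public projects with MRS valuations.) -/

import Mathlib

/-! The per-draw weights are affine in `x`, so along a segment `a • x + b • y` the draws are i.i.d.
with weights `a X + b Y`. Conditioning on the first draw and inducting on the number of draws, the
concavity defect of `t + 1` draws is `a b ∑ₒ δₒ (E_X[v(o ∪ ·)] - E_Y[v(o ∪ ·)])` with `δ = X - Y`;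
a second induction writes this as a nonnegative combination of the quadratic forms
`∑ δₒ δₒ' v(B ∪ o ∪ o')` with `∑ δ = 0`. For a matroid rank function
`rk(B ∪ o ∪ o') = rk B + cₒ + cₒ' - cₒ cₒ' [cl(B ∪ o) = cl(B ∪ o')]`, where `cₒ ∈ {0, 1}` is the
rank gain of `o`, so on `∑ δ = 0` the form is minus a sum of squares over closure classes.
-/

open Finset

/-- Per-draw weights: project `j` is drawn with probability `x j / k`, and
`none` (no project) with the remaining probability `1 - (∑ j, x j)/k`. -/
noncomputable def lotW {m : ℕ} (k : ℕ) (x : Fin m → ℝ) : Option (Fin m) → ℝ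
  | some j => x j / k
  | none => 1 - (∑ j, x j) / k

/-- Probability of a particular draw function `f : Fin t → Option (Fin m)`,
with per-draw weights determined by `k` and `x`. -/
noncomputable def lotP {m : ℕ} (k t : ℕ) (x : Fin m → ℝ)
    (f : Fin t → Option (Fin m)) : ℝ :=
  ∏ s, lotW k x (f s)

/-- The set of projects chosen by a draw function `f`. -/
def lotProj {m t : ℕ} (f : Fin t → Option (Fin m)) : Finset (Fin m) :=
  Finset.univ.filter (fun j => ∃ s, f s = some j)


/-- Expected value of the set function `v` under the `k`-bounded-lottery
rounding scheme `r_k` applied to `x`. -/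
noncomputable def lotG {m : ℕ} (k : ℕ) (v : Finset (Fin m) → ℝ)
    (x : Fin m → ℝ) : ℝ :=
  ∑ f : Fin k → Option (Fin m), lotP k k x f * v (lotProj f)

open Classical in
/-- The rank of the finite set `S` in the matroid `M`: the maximum cardinality
of an independent subset of `S`. -/
noncomputable def matFinRank {m : ℕ} (M : Matroid (Fin m)) (S : Finset (Fin m)) : ℕ :=
  (S.powerset.filter
    (fun I : Finset (Fin m) => M.Indep (↑I : Set (Fin m)))).sup Finset.card

/-- `v` is a matroid rank sum (MRS) function: a nonnegative weighted sum of
rank functions of matroids on `Fin m` with full ground set. -/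
def IsMRS {m : ℕ} (v : Finset (Fin m) → ℝ) : Prop :=
  ∃ (κ : ℕ) (M : Fin κ → Matroid (Fin m)) (w : Fin κ → ℝ),
    (∀ ℓ, (M ℓ).E = Set.univ) ∧ (∀ ℓ, 0 ≤ w ℓ) ∧
    ∀ S : Finset (Fin m), v S = ∑ ℓ, w ℓ * (matFinRank (M ℓ) S : ℝ)

section Lottery

variable {α : Type*} [Fintype α] [DecidableEq α]

noncomputable def lotteryValue (w : Option α → ℝ) : ℕ → (Finset α → ℝ) → ℝ
  | 0, v => v ∅
  | t + 1, v => ∑ o, w o * lotteryValue w t (fun S => v (o.toFinset ∪ S))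

/-- For every `B`, the kernel `(o, o') ↦ v (B ∪ o ∪ o')` on single draws is of negative type
(conditionally negative semidefinite). -/
def IsNegTypeOnDraws (v : Finset α → ℝ) : Prop :=
  ∀ (B : Finset α) (δ : Option α → ℝ), ∑ o, δ o = 0 →
    ∑ o, ∑ o', δ o * δ o' * v (o.toFinset ∪ (o'.toFinset ∪ B)) ≤ 0

variable {v : Finset α → ℝ}

lemma IsNegTypeOnDraws.comp_union (hv : IsNegTypeOnDraws v) (A : Finset α) :
    IsNegTypeOnDraws (fun S => v (A ∪ S)) := by
  intro B δ hδ
  simpa only [union_left_comm A] using hv (A ∪ B) δ hδ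

lemma IsNegTypeOnDraws.sum_mul {ι : Type*} (s : Finset ι) {c : ι → ℝ} {u : ι → Finset α → ℝ}
    (hc : ∀ i ∈ s, 0 ≤ c i) (hu : ∀ i ∈ s, IsNegTypeOnDraws (u i)) :
    IsNegTypeOnDraws (fun S => ∑ i ∈ s, c i * u i S) := by
  intro B δ hδ
  have hswap : ∑ o, ∑ o', δ o * δ o' * ∑ i ∈ s, c i * u i (o.toFinset ∪ (o'.toFinset ∪ B)) =
      ∑ i ∈ s, c i * ∑ o, ∑ o', δ o * δ o' * u i (o.toFinset ∪ (o'.toFinset ∪ B)) := by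
    simp only [mul_sum]
    conv_rhs => rw [sum_comm]
    refine sum_congr rfl fun o _ => ?_
    rw [sum_comm]
    exact sum_congr rfl fun _ _ => sum_congr rfl fun _ _ => by ring
  rw [hswap]
  exact sum_nonpos fun i hi => mul_nonpos_of_nonneg_of_nonpos (hc i hi) (hu i hi B δ hδ)

variable {w X Y : Option α → ℝ}

lemma sum_sum_mul_lotteryValue_nonpos (hw : ∀ o, 0 ≤ w o) (hv : IsNegTypeOnDraws v)
    {δ : Option α → ℝ} (hδ : ∑ o, δ o = 0) (t : ℕ) :
    ∑ o, ∑ o', δ o * δ o' *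
      lotteryValue w t (fun S => v (o.toFinset ∪ (o'.toFinset ∪ S))) ≤ 0 := by
  induction t generalizing v with
  | zero => exact hv ∅ δ hδ
  | succ t ih =>
    have hswap : ∑ o, ∑ o', δ o * δ o' *
        lotteryValue w (t + 1) (fun S => v (o.toFinset ∪ (o'.toFinset ∪ S))) =
        ∑ o'', w o'' * ∑ o, ∑ o', δ o * δ o' * lotteryValue w t
          (fun S => v (o''.toFinset ∪ (o.toFinset ∪ (o'.toFinset ∪ S)))) := by
      simp only [lotteryValue, mul_sum]
      conv_rhs => rw [sum_comm]
      refine sum_congr rfl fun o _ => ?_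
      rw [sum_comm]
      refine sum_congr rfl fun o'' _ => sum_congr rfl fun o' _ => ?_
      simp only [union_left_comm o''.toFinset]
      ring
    rw [hswap]
    refine sum_nonpos fun o'' _ => mul_nonpos_of_nonneg_of_nonpos (hw o'') ?_
    simpa only using ih (hv.comp_union o''.toFinset)

lemma sum_mul_sub_lotteryValue_nonpos (hX : ∀ o, 0 ≤ X o) (hY : ∀ o, 0 ≤ Y o)
    (hXY : ∑ o, X o = ∑ o, Y o) (hv : IsNegTypeOnDraws v) (t : ℕ) :
    ∑ o, (X o - Y o) * (lotteryValue X t (fun S => v (o.toFinset ∪ S)) -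
      lotteryValue Y t (fun S => v (o.toFinset ∪ S))) ≤ 0 := by
  induction t generalizing v with
  | zero => simp [lotteryValue]
  | succ t ih =>
    have hδ : ∑ o, (X o - Y o) = 0 := by rw [sum_sub_distrib, hXY, sub_self]
    have hsplit : ∑ o, (X o - Y o) * (lotteryValue X (t + 1) (fun S => v (o.toFinset ∪ S)) -
          lotteryValue Y (t + 1) (fun S => v (o.toFinset ∪ S))) =
        ∑ o, ∑ o', (X o - Y o) * (X o' - Y o') *
            lotteryValue X t (fun S => v (o.toFinset ∪ (o'.toFinset ∪ S))) +
          ∑ o', Y o' * ∑ o, (X o - Y o) *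
            (lotteryValue X t (fun S => v (o'.toFinset ∪ (o.toFinset ∪ S))) -
              lotteryValue Y t (fun S => v (o'.toFinset ∪ (o.toFinset ∪ S)))) := by
      simp only [lotteryValue, mul_sub, mul_sum]
      conv_rhs => arg 2; rw [sum_comm]
      rw [← sum_add_distrib]
      refine sum_congr rfl fun o _ => ?_
      simp only [union_left_comm _ o.toFinset, ← sum_sub_distrib, ← sum_add_distrib]
      exact sum_congr rfl fun o' _ => by ring
    rw [hsplit]
    refine add_nonpos (sum_sum_mul_lotteryValue_nonpos hX hv hδ t) ?_
    refine sum_nonpos fun o' _ => mul_nonpos_of_nonneg_of_nonpos (hY o') ?_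
    simpa only using ih (hv.comp_union o'.toFinset)

theorem lotteryValue_concave (hX : ∀ o, 0 ≤ X o) (hY : ∀ o, 0 ≤ Y o)
    (hXY : ∑ o, X o = ∑ o, Y o) (hv : IsNegTypeOnDraws v)
    {a b : ℝ} (ha : 0 ≤ a) (hb : 0 ≤ b) (hab : a + b = 1) (t : ℕ) :
    a * lotteryValue X t v + b * lotteryValue Y t v ≤
      lotteryValue (fun o => a * X o + b * Y o) t v := by
  induction t generalizing v with
  | zero => simp only [lotteryValue, ← add_mul, hab, one_mul, le_refl]
  | succ t ih =>
    set A := fun o : Option α => lotteryValue X t (fun S => v (o.toFinset ∪ S))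
    set B := fun o : Option α => lotteryValue Y t (fun S => v (o.toFinset ∪ S))
    have hD : ∑ o, (X o - Y o) * (A o - B o) ≤ 0 := sum_mul_sub_lotteryValue_nonpos hX hY hXY hv t
    calc a * lotteryValue X (t + 1) v + b * lotteryValue Y (t + 1) v
        = ∑ o, (a * X o + b * Y o) * (a * A o + b * B o) +
            a * b * ∑ o, (X o - Y o) * (A o - B o) := by
          simp only [lotteryValue, mul_sum, ← sum_add_distrib]
          refine sum_congr rfl fun o _ => ?_
          linear_combination (-(a * X o * A o) - b * Y o * B o) * hab
      _ ≤ ∑ o, (a * X o + b * Y o) * (a * A o + b * B o) := by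
          nlinarith [mul_nonneg ha hb]
      _ ≤ lotteryValue (fun o => a * X o + b * Y o) (t + 1) v := by
          refine sum_le_sum fun o _ => mul_le_mul_of_nonneg_left (ih (hv.comp_union o.toFinset))
            (add_nonneg (mul_nonneg ha (hX o)) (mul_nonneg hb (hY o)))

end Lottery

namespace Matroid

variable {α : Type*} {M : Matroid α} {X Y : Set α} {e f : α}

lemma eRk_insert_eq_of_mem_closure (he : e ∈ M.closure X) (hXY : X ⊆ Y) :
    M.eRk (insert e Y) = M.eRk Y := by
  rw [← eRk_insert_closure_eq, Set.insert_eq_of_mem (M.closure_subset_closure hXY he),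
    eRk_closure_eq]

lemma eRk_insert_insert_of_notMem_closure (he : e ∈ M.E \ M.closure X)
    (hf : f ∈ M.E \ M.closure X) [Decidable (M.closure (insert e X) = M.closure (insert f X))] :
    M.eRk (insert e (insert f X)) =
      M.eRk X + if M.closure (insert e X) = M.closure (insert f X) then 1 else 2 := by
  by_cases hef : e ∈ M.closure (insert f X)
  · rw [if_pos (closure_insert_congr ⟨hef, he.2⟩), eRk_insert_eq_of_mem_closure hef subset_rfl,
      eRk_insert_eq_add_one hf]
  · have hne : M.closure (insert e X) ≠ M.closure (insert f X) := fun h =>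
      hef (h ▸ M.mem_closure_of_mem' (Set.mem_insert e X) he.1)
    rw [if_neg hne, eRk_insert_eq_add_one ⟨he.1, hef⟩, eRk_insert_eq_add_one hf, add_assoc]
    rfl

end Matroid

lemma sum_sum_ite_eq_mul_nonneg {ι κ : Type*} [Fintype ι] [DecidableEq κ] (g : ι → κ)
    (ε : ι → ℝ) : 0 ≤ ∑ i, ∑ j, if g i = g j then ε i * ε j else 0 := by
  have hfib : ∀ i j, (if g i = g j then ε i * ε j else 0) = ∑ c ∈ univ.image g,
      (if g i = c then ε i else 0) * (if g j = c then ε j else 0) := by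
    intro i j
    simp [ite_mul, mul_ite, Finset.sum_ite_eq', eq_comm]
  calc (0 : ℝ) ≤ ∑ c ∈ univ.image g, (∑ i, if g i = c then ε i else 0) ^ 2 :=
        sum_nonneg fun _ _ => sq_nonneg _
    _ = ∑ i, ∑ c ∈ univ.image g, ∑ j,
          (if g i = c then ε i else 0) * (if g j = c then ε j else 0) := by
        simp only [sq, sum_mul_sum]
        exact sum_comm
    _ = ∑ i, ∑ j, if g i = g j then ε i * ε j else 0 := by
        simp only [hfib]
        exact sum_congr rfl fun _ _ => sum_comm

section MatroidRank

variable {m : ℕ} {M : Matroid (Fin m)} {B C : Finset (Fin m)} {e f : Fin m}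

lemma matFinRank_eq_eRk (M : Matroid (Fin m)) (S : Finset (Fin m)) :
    (matFinRank M S : ℕ∞) = M.eRk S := by
  classical
  obtain ⟨I, hI⟩ := M.exists_isBasis' (S : Set (Fin m))
  lift I to Finset (Fin m) using S.finite_toSet.subset hI.subset
  rw [← hI.encard_eq_eRk, Set.encard_coe_eq_coe_finsetCard, Nat.cast_inj]
  refine le_antisymm (Finset.sup_le fun J hJ => ?_) (Finset.le_sup ?_)
  · rw [Finset.mem_filter, Finset.mem_powerset] at hJ
    have := hJ.2.encard_le_eRk_of_subset (Finset.coe_subset.2 hJ.1)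
    rw [← hI.encard_eq_eRk, Set.encard_coe_eq_coe_finsetCard,
      Set.encard_coe_eq_coe_finsetCard] at this
    exact_mod_cast this
  · rw [Finset.mem_filter, Finset.mem_powerset]
    exact ⟨Finset.coe_subset.1 hI.subset, hI.indep⟩

lemma matFinRank_insert_of_mem_closure (he : e ∈ M.closure B) (hBC : B ⊆ C) :
    matFinRank M (insert e C) = matFinRank M C := by
  rw [← Nat.cast_inj (R := ℕ∞)]
  push_cast [matFinRank_eq_eRk]
  exact M.eRk_insert_eq_of_mem_closure he (Finset.coe_subset.2 hBC)

lemma matFinRank_insert_of_notMem_closure (hE : M.E = Set.univ) (he : e ∉ M.closure B) :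
    matFinRank M (insert e B) = matFinRank M B + 1 := by
  rw [← Nat.cast_inj (R := ℕ∞)]
  push_cast [matFinRank_eq_eRk]
  exact M.eRk_insert_eq_add_one ⟨hE ▸ Set.mem_univ e, he⟩

open Classical in
lemma matFinRank_insert_insert_of_notMem_closure (hE : M.E = Set.univ)
    (he : e ∉ M.closure B) (hf : f ∉ M.closure B) :
    matFinRank M (insert e (insert f B)) = matFinRank M B +
      if M.closure (insert e (B : Set (Fin m))) = M.closure (insert f ↑B) then 1 else 2 := by
  rw [← Nat.cast_inj (R := ℕ∞)]
  push_cast [matFinRank_eq_eRk]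
  exact M.eRk_insert_insert_of_notMem_closure ⟨hE ▸ Set.mem_univ e, he⟩ ⟨hE ▸ Set.mem_univ f, hf⟩

noncomputable def rankGain (M : Matroid (Fin m)) (B : Finset (Fin m)) (o : Option (Fin m)) : ℝ :=
  matFinRank M (o.toFinset ∪ B) - matFinRank M B

open Classical in
lemma matFinRank_toFinset_union_toFinset_union (hE : M.E = Set.univ) (B : Finset (Fin m))
    (o o' : Option (Fin m)) :
    (matFinRank M (o.toFinset ∪ (o'.toFinset ∪ B)) : ℝ) =
      matFinRank M B + rankGain M B o + rankGain M B o' -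
        if M.closure ↑(o.toFinset ∪ B) = M.closure ↑(o'.toFinset ∪ B) then
          rankGain M B o * rankGain M B o' else 0 := by
  rcases o with _ | e
  · simp [rankGain]
  rcases o' with _ | f
  · simp [rankGain]
  simp only [Option.toFinset_some, ← Finset.insert_eq, rankGain]
  by_cases he : e ∈ M.closure B
  · rw [matFinRank_insert_of_mem_closure he (Finset.subset_insert f B),
      matFinRank_insert_of_mem_closure he subset_rfl]
    simp
  by_cases hf : f ∈ M.closure B
  · rw [Finset.insert_comm, matFinRank_insert_of_mem_closure hf (Finset.subset_insert e B),
      matFinRank_insert_of_mem_closure hf subset_rfl]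
    simp
  rw [matFinRank_insert_insert_of_notMem_closure hE he hf,
    matFinRank_insert_of_notMem_closure hE he, matFinRank_insert_of_notMem_closure hE hf]
  by_cases hcl : M.closure (insert e (B : Set (Fin m))) = M.closure (insert f ↑B)
  · simp [hcl]
  · simp [hcl]
    ring

theorem isNegTypeOnDraws_matFinRank (hE : M.E = Set.univ) :
    IsNegTypeOnDraws (fun S => (matFinRank M S : ℝ)) := by
  classical
  intro B δ hδ
  set c := rankGain M B
  set g := fun o : Option (Fin m) => M.closure ↑(o.toFinset ∪ B)
  calc ∑ o, ∑ o', δ o * δ o' * (matFinRank M (o.toFinset ∪ (o'.toFinset ∪ B)) : ℝ)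
      = ∑ o, ∑ o', (δ o * (matFinRank M B + c o) * δ o' + δ o * (δ o' * c o')) -
          ∑ o, ∑ o', if g o = g o' then δ o * c o * (δ o' * c o') else 0 := by
        simp only [matFinRank_toFinset_union_toFinset_union hE, ← sum_sub_distrib]
        refine sum_congr rfl fun o _ => sum_congr rfl fun o' _ => ?_
        split_ifs <;> ring
    _ = -∑ o, ∑ o', if g o = g o' then δ o * c o * (δ o' * c o') else 0 := by
        simp only [sum_add_distrib, ← mul_sum, ← sum_mul, hδ]
        ring
    _ ≤ 0 := neg_nonpos.2 (sum_sum_ite_eq_mul_nonneg g _)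

lemma IsMRS.isNegTypeOnDraws {v : Finset (Fin m) → ℝ} (hv : IsMRS v) :
    IsNegTypeOnDraws v := by
  obtain ⟨κ, M, w, hE, hw, hvw⟩ := hv
  rw [show v = fun S => ∑ ℓ, w ℓ * (matFinRank (M ℓ) S : ℝ) from funext hvw]
  exact IsNegTypeOnDraws.sum_mul univ (fun ℓ _ => hw ℓ) fun ℓ _ =>
    isNegTypeOnDraws_matFinRank (hE ℓ)

end MatroidRank

section BoundedLottery

variable {m : ℕ}

lemma lotProj_cons {t : ℕ} (o : Option (Fin m)) (g : Fin t → Option (Fin m)) :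
    lotProj (Fin.cons o g : Fin (t + 1) → Option (Fin m)) = o.toFinset ∪ lotProj g := by
  ext j
  simp [lotProj, Fin.exists_fin_succ, eq_comm]

lemma lotteryValue_eq_sum (w : Option (Fin m) → ℝ) (t : ℕ) (v : Finset (Fin m) → ℝ) :
    lotteryValue w t v = ∑ f : Fin t → Option (Fin m), (∏ s, w (f s)) * v (lotProj f) := by
  induction t generalizing v with
  | zero => simp [lotteryValue, lotProj]
  | succ t ih =>
    rw [← (Fin.consEquiv fun _ => Option (Fin m)).sum_comp, Fintype.sum_prod_type]
    simp only [lotteryValue, ih, mul_sum]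
    refine sum_congr rfl fun o _ => sum_congr rfl fun g _ => ?_
    simp only [Fin.consEquiv, Equiv.coe_fn_mk, Fin.prod_univ_succ, Fin.cons_zero, Fin.cons_succ,
      lotProj_cons]
    ring

lemma lotG_eq_lotteryValue (k : ℕ) (v : Finset (Fin m) → ℝ) (x : Fin m → ℝ) :
    lotG k v x = lotteryValue (lotW k x) k v := by
  rw [lotteryValue_eq_sum]
  rfl

lemma lotW_nonneg {k : ℕ} {x : Fin m → ℝ} (hx : ∀ j, 0 ≤ x j) (hxk : ∑ j, x j ≤ k)
    (o : Option (Fin m)) : 0 ≤ lotW k x o := by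
  cases o with
  | none => exact sub_nonneg.2 (div_le_one_of_le₀ hxk k.cast_nonneg)
  | some j => exact div_nonneg (hx j) k.cast_nonneg

lemma sum_lotW (k : ℕ) (x : Fin m → ℝ) : ∑ o, lotW k x o = 1 := by
  simp [Fintype.sum_option, lotW, ← sum_div]

lemma lotW_smul_add_smul {k : ℕ} {a b : ℝ} (hab : a + b = 1) (x y : Fin m → ℝ) :
    lotW k (a • x + b • y) = fun o => a * lotW k x o + b * lotW k y o := by
  funext o
  cases o with
  | none =>
    simp only [lotW, Pi.add_apply, Pi.smul_apply, smul_eq_mul, sum_add_distrib, ← mul_sum]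
    linear_combination (-1 : ℝ) * hab
  | some j =>
    simp only [lotW, Pi.add_apply, Pi.smul_apply, smul_eq_mul]
    ring

end BoundedLottery

lemma convex_unitCube_inter_sum_le {ι : Type*} [Fintype ι] (c : ℝ) :
    Convex ℝ {x : ι → ℝ | (∀ j, 0 ≤ x j ∧ x j ≤ 1) ∧ ∑ j, x j ≤ c} := by
  rintro x ⟨hx, hxc⟩ y ⟨hy, hyc⟩ a b ha hb hab
  refine ⟨fun j => ⟨?_, ?_⟩, ?_⟩ <;>
    simp only [Pi.add_apply, Pi.smul_apply, smul_eq_mul, sum_add_distrib, ← mul_sum]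
  · nlinarith [hx j, hy j]
  · nlinarith [hx j, hy j]
  · calc a * ∑ j, x j + b * ∑ j, y j ≤ a * c + b * c :=
          add_le_add (mul_le_mul_of_nonneg_left hxc ha) (mul_le_mul_of_nonneg_left hyc hb)
      _ = c := by rw [← add_mul, hab, one_mul]

theorem stmt12_general (m k : ℕ)
    (v : Finset (Fin m) → ℝ) (hv : IsMRS v) :
    ConcaveOn ℝ
      {x : Fin m → ℝ | (∀ j, 0 ≤ x j ∧ x j ≤ 1) ∧ ∑ j, x j ≤ (k : ℝ)}
      (lotG k v) := by
  refine ⟨convex_unitCube_inter_sum_le _, fun x hx y hy a b ha hb hab => ?_⟩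
  simp only [smul_eq_mul, lotG_eq_lotteryValue, lotW_smul_add_smul hab]
  exact lotteryValue_concave (lotW_nonneg (fun j => (hx.1 j).1) hx.2)
    (lotW_nonneg (fun j => (hy.1 j).1) hy.2) (by rw [sum_lotW, sum_lotW]) hv.isNegTypeOnDraws
    ha hb hab k

theorem stmt12 (m k : ℕ) (hm : 1 ≤ m) (hk : 1 ≤ k)
    (v : Finset (Fin m) → ℝ) (hv : IsMRS v) :
    ConcaveOn ℝ
      {x : Fin m → ℝ | (∀ j, 0 ≤ x j ∧ x j ≤ 1) ∧ ∑ j, x j ≤ (k : ℝ)}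
      (lotG k v) :=
  stmt12_general m k v hv
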